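/- Let i : A ⊂ K be a small full dense subcategory of a cocomplete (hence complete) category K, with induced reflection L := Lan_y i ⊣ R := K(i−,−). Then the codensity monad T_i = Ran_i i of the inclusion is isomorphic, as a monad on K, to the monad L ∘ Spec ∘ O ∘ R induced by the composite adjunction O ∘ R ⊣ L ∘ Spec; in particular the codensity monad of any small full dense subcategory of a cocomplete category is induced by the Isbell adjunction via conjugation along the reflection. -/

import Mathlib

/-! STATEMENT 3: the codensity monad of a small full dense subcategory `i : A ⊂ K` of a
cocomplete category is isomorphic, as a monad, to the monad `L ∘ Spec ∘ O ∘ R` induced by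
the composite adjunction `O ∘ R ⊣ L ∘ Spec` obtained from the Isbell adjunction by
conjugation along the reflection `L = Lan_y i ⊣ R = K(i-,-)`. -/

namespace CategoryTheory

open Functor Limits

noncomputable section

universe w w₂ v v₂ u u₂

namespace Codensity

variable {C : Type u} [Category.{v} C] {D : Type u₂} [Category.{v₂} D]
  (F : C ⥤ D) [F.HasRightKanExtension F]

/-- The underlying endofunctor of the codensity monad of `F`: the right Kan
extension of `F` along itself. -/
abbrev T : D ⥤ D := F.rightKanExtension F

/-- The counit of the right Kan extension. -/
abbrev ε : F ⋙ T F ⟶ F := F.rightKanExtensionCounit F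

/-- The unit of the codensity monad. -/
def unit : 𝟭 D ⟶ T F :=
  (T F).liftOfIsRightKanExtension (ε F) (𝟭 D) F.rightUnitor.hom

/-- The multiplication of the codensity monad. -/
def mul : T F ⋙ T F ⟶ T F :=
  (T F).liftOfIsRightKanExtension (ε F) (T F ⋙ T F)
    ((Functor.associator F (T F) (T F)).inv ≫ whiskerRight (ε F) (T F) ≫ ε F)

lemma unit_fac (X : C) : (unit F).app (F.obj X) ≫ (ε F).app X = 𝟙 (F.obj X) := by
  simp [unit]

lemma mul_fac (X : C) :
    (mul F).app (F.obj X) ≫ (ε F).app X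
      = (T F).map ((ε F).app X) ≫ (ε F).app X := by
  have h := (T F).liftOfIsRightKanExtension_fac_app (ε F)
    (T F ⋙ T F) ((Functor.associator F (T F) (T F)).inv ≫ whiskerRight (ε F) (T F) ≫ ε F) X
  simp only [NatTrans.comp_app, Functor.associator_inv_app, whiskerRight_app,
    Functor.comp_obj, Category.id_comp] at h
  simpa [mul] using h

lemma left_unit' : whiskerLeft (T F) (unit F) ≫ mul F = (T F).rightUnitor.hom := by
  apply (T F).hom_ext_of_isRightKanExtension (ε F)
  ext X
  have h := (unit F).naturality ((ε F).app X)
  simp only [Functor.comp_obj, Functor.id_obj, Functor.id_map] at h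
  simp only [NatTrans.comp_app, whiskerLeft_app, Functor.rightUnitor_hom_app,
    Functor.comp_obj, Functor.id_obj, Category.id_comp, Category.assoc]
  rw [mul_fac, ← Category.assoc, ← h, Category.assoc, unit_fac]
  simp

lemma right_unit' : whiskerRight (unit F) (T F) ≫ mul F = (T F).leftUnitor.hom := by
  apply (T F).hom_ext_of_isRightKanExtension (ε F)
  ext X
  simp only [NatTrans.comp_app, whiskerRight_app, whiskerLeft_app, Functor.leftUnitor_hom_app,
    Functor.comp_obj, Functor.id_obj, Category.id_comp, Category.assoc]
  rw [mul_fac, ← Category.assoc, ← Functor.map_comp, unit_fac]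
  simp

lemma assoc' :
    whiskerRight (mul F) (T F) ≫ mul F
      = (Functor.associator _ _ _).hom ≫ whiskerLeft (T F) (mul F) ≫ mul F := by
  apply (T F).hom_ext_of_isRightKanExtension (ε F)
  ext X
  have h := (mul F).naturality ((ε F).app X)
  simp only [Functor.comp_obj, Functor.comp_map] at h
  simp only [NatTrans.comp_app, whiskerRight_app, whiskerLeft_app, Functor.associator_hom_app,
    Functor.comp_obj, Category.id_comp, Category.assoc]
  conv_lhs => rw [mul_fac, ← Category.assoc, ← Functor.map_comp, mul_fac, Functor.map_comp,
    Category.assoc]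
  conv_rhs => rw [mul_fac, ← Category.assoc, ← h, Category.assoc, mul_fac]

end Codensity

/-- The codensity monad of a functor `F`, defined as the right Kan extension of `F`
along itself, with its canonical monad structure. -/
def codensityMonad {C : Type u} [Category.{v} C] {D : Type u₂} [Category.{v₂} D]
    (F : C ⥤ D) [F.HasRightKanExtension F] : Monad D where
  toFunctor := Codensity.T F
  η := Codensity.unit F
  μ := Codensity.mul F
  left_unit X := by
    simpa using NatTrans.congr_app (Codensity.left_unit' F) X
  right_unit X := by
    simpa using NatTrans.congr_app (Codensity.right_unit' F) X
  assoc X := by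
    simpa using NatTrans.congr_app (Codensity.assoc' F) X

end

end CategoryTheory

universe v' u'

open CategoryTheory Functor Limits

noncomputable section

/-- The copresheaf embedding `y♯ : A ⥤ (Set^A)ᵒᵖ`, `a ↦ A(a, -)`. -/
def ysharp (A : Type u') [SmallCategory A] : A ⥤ (A ⥤ Type u')ᵒᵖ := coyoneda.rightOp

/-!
Write `F = O ∘ R` and `G = L ∘ Spec`. By the Yoneda lemma, `O` sends a presheaf `P` to
`b ↦ Nat(P, y b)`, so density of `i` (full faithfulness of `R`) identifies `F k` with the co-nerve
`K(k, i -)`. The co-nerve of a full functor is the right Kan extension of its restriction along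
`i`, and it is bijective on maps into objects of `A`; hence the unit of `F ⊣ G` is invertible on
`A`. Right adjoints preserve right Kan extensions, so `G ∘ F` is `Ran_i (G ∘ F ∘ i) ≅ Ran_i i`,
and since this Kan counit (the inverse of the unit on `A`) is compatible with `η` and `μ`, the
comparison with the codensity monad is an isomorphism of monads.
-/

namespace CategoryTheory

universe w₁ v₁ u₁ u₂

namespace Functor

section KanExtension

variable {C D H : Type*} [Category* C] [Category* D] [Category* H]

lemma isRightKanExtension_of_bijective {L : C ⥤ D} {F : C ⥤ H} {F' : D ⥤ H} (α : L ⋙ F' ⟶ F)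
    (h : ∀ G : D ⥤ H, Function.Bijective fun β : G ⟶ F' => whiskerLeft L β ≫ α) :
    F'.IsRightKanExtension α := by
  refine ⟨⟨IsTerminal.ofUniqueHom (fun G => CostructuredArrow.homMk
    ((h G.left).2 G.hom).choose ((h G.left).2 G.hom).choose_spec) fun G β => ?_⟩⟩
  exact CostructuredArrow.hom_ext _ _ <| (h G.left).1 <|
    (CostructuredArrow.w β).trans ((h G.left).2 G.hom).choose_spec.symm

lemma isRightKanExtension_id_of_iso {F F' : D ⥤ H} (e : F ≅ F') (L : C ⥤ D)
    [F'.IsRightKanExtension (𝟙 (L ⋙ F'))] : F.IsRightKanExtension (𝟙 (L ⋙ F)) :=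
  (isRightKanExtension_iff_of_iso₂ (𝟙 (L ⋙ F)) (𝟙 (L ⋙ F')) (isoWhiskerLeft L e) e
    (by simp)).2 ‹_›

lemma isLeftKanExtension_of_iso₁ {L L' : C ⥤ D} (e : L ≅ L') {F : C ⥤ H} {F' : D ⥤ H}
    (α : F ⟶ L ⋙ F') [F'.IsLeftKanExtension α] :
    F'.IsLeftKanExtension (α ≫ whiskerRight e.hom F') :=
  ⟨⟨(IsInitial.isInitialIffObj (leftExtensionEquivalenceOfIso₁ e F).functor _).1
    (F'.isUniversalOfIsLeftKanExtension α)⟩⟩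

end KanExtension

lemma map_bijective_of_iso {C D : Type*} [Category* C] [Category* D] {F F' : C ⥤ D}
    (e : F ≅ F') {X Y : C} (h : Function.Bijective fun f : X ⟶ Y => F'.map f) :
    Function.Bijective fun f : X ⟶ Y => F.map f := by
  convert ((e.app X).symm.homCongr (e.app Y).symm).bijective.comp h using 1
  funext f
  simp

end Functor

namespace Adjunction

variable {C D E : Type*} [Category* C] [Category* D] [Category* E] {F : D ⥤ E} {G : E ⥤ D}

lemma preservesRightKanExtension {B : Type*} [Category* B] (adj : F ⊣ G) (Φ : C ⥤ E)
    (L : C ⥤ B) : G.PreservesRightKanExtension Φ L where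
  preserves F' α _ := by
    refine Functor.isRightKanExtension_of_bijective _ fun H => ?_
    have : (fun β : H ⟶ F' ⋙ G =>
          whiskerLeft L β ≫ (Functor.associator _ _ _).inv ≫ whiskerRight α G) =
        (adj.whiskerRight C).homEquiv (L ⋙ H) Φ ∘ (fun γ => whiskerLeft L γ ≫ α) ∘
          ((adj.whiskerRight B).homEquiv H F').symm := by
      funext β
      ext X
      simp only [Function.comp_apply, homEquiv_unit, homEquiv_counit]
      simp
    rw [this]
    exact (Equiv.bijective _).comp
      ((F'.homEquivOfIsRightKanExtension α (H ⋙ F)).bijective.comp (Equiv.bijective _))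

lemma isIso_unit_app_of_map_bijective (adj : F ⊣ G) {X : D}
    (h : ∀ Y, Function.Bijective fun f : Y ⟶ X => F.map f) : IsIso (adj.unit.app X) :=
  isIso_of_yoneda_map_bijective _ fun Y => by
    show Function.Bijective fun f : Y ⟶ X => f ≫ adj.unit.app X
    have : (fun f : Y ⟶ X => f ≫ adj.unit.app X) =
        adj.homEquiv Y (F.obj X) ∘ fun f => F.map f := by
      funext f
      simp [homEquiv_unit]
    rw [this]
    exact (Equiv.bijective _).comp (h Y)

end Adjunction

section Codensity

variable {C D E : Type*} [Category* C] [Category* D] [Category* E]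

def codensityMonadIsoOfIsRightKanExtension (F : C ⥤ D) [F.HasRightKanExtension F] (T : Monad D)
    (c : F ⋙ T.toFunctor ⟶ F) [T.toFunctor.IsRightKanExtension c]
    (hη : ∀ X, T.η.app (F.obj X) ≫ c.app X = 𝟙 _)
    (hμ : ∀ X, T.μ.app (F.obj X) ≫ c.app X = T.map (c.app X) ≫ c.app X) :
    codensityMonad F ≅ T := by
  let φ := rightKanExtensionUnique (Codensity.T F) (Codensity.ε F) T.toFunctor c
  have hφ (X : C) : φ.hom.app (F.obj X) ≫ c.app X = (Codensity.ε F).app X := by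
    simp [φ]
  have unit_comp : Codensity.unit F ≫ φ.hom = T.η := by
    refine T.toFunctor.hom_ext_of_isRightKanExtension c _ _ (NatTrans.ext (funext fun X => ?_))
    dsimp
    rw [Category.assoc, hφ, Codensity.unit_fac, hη]
    rfl
  have mul_comp : Codensity.mul F ≫ φ.hom =
      whiskerRight φ.hom (Codensity.T F) ≫ whiskerLeft T.toFunctor φ.hom ≫ T.μ := by
    refine T.toFunctor.hom_ext_of_isRightKanExtension c _ _ (NatTrans.ext (funext fun X => ?_))
    dsimp
    rw [Category.assoc, hφ, Codensity.mul_fac, Category.assoc, Category.assoc, hμ,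
      ← φ.hom.naturality_assoc, hφ, ← Functor.map_comp_assoc, hφ]
  refine MonadIso.mk φ (NatTrans.congr_app unit_comp) fun Y => ?_
  rw [Category.assoc]
  exact NatTrans.congr_app mul_comp Y

def Adjunction.codensityMonadIso {F : D ⥤ E} {G : E ⥤ D} (adj : F ⊣ G) (i : C ⥤ D)
    [i.HasRightKanExtension i] [F.IsRightKanExtension (𝟙 (i ⋙ F))]
    [∀ X, IsIso (adj.unit.app (i.obj X))] :
    codensityMonad i ≅ adj.toMonad := by
  let u : i ≅ i ⋙ F ⋙ G :=
    NatIso.ofComponents (fun X => asIso (adj.unit.app (i.obj X))) fun f => adj.unit.naturality _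
  have : (F ⋙ G).IsRightKanExtension u.inv := by
    refine (isRightKanExtension_iff_of_iso₂ _ _ u.symm (Iso.refl _) ?_).1
      ((adj.preservesRightKanExtension (i ⋙ F) i).preserves F (𝟙 _))
    ext X
    simp
  have : adj.toMonad.toFunctor.IsRightKanExtension u.inv := this
  refine codensityMonadIsoOfIsRightKanExtension i adj.toMonad u.inv
    (fun X => u.hom_inv_id_app X) fun X => ?_
  change G.map (adj.counit.app _) ≫ inv (adj.unit.app (i.obj X)) =
    G.map (F.map (inv (adj.unit.app (i.obj X)))) ≫ inv (adj.unit.app (i.obj X))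
  rw [Functor.map_inv, adj.inv_map_unit]

end Codensity

namespace Functor

variable {A : Type u₁} [Category.{v₁} A] {K : Type u₂} [Category.{w₁} K] (i : A ⥤ K)

def conerve : K ⥤ (A ⥤ Type w₁)ᵒᵖ := (coyoneda ⋙ (whiskeringLeft A K (Type w₁)).obj i).rightOp

@[simp]
lemma conerve_obj_unop_map (k : K) {a b : A} (m : a ⟶ b) (f : k ⟶ i.obj a) :
    (i.conerve.obj k).unop.map m f = f ≫ i.map m := rfl

@[simp]
lemma conerve_map_unop_app {k k' : K} (f : k ⟶ k') (a : A) (g : k' ⟶ i.obj a) :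
    (i.conerve.map f).unop.app a g = f ≫ g := rfl

instance : PreservesColimitsOfSize.{w₁, w₁} i.conerve :=
  preservesColimitsOfSize_rightOp _

variable {i} {H : K ⥤ (A ⥤ Type w₁)ᵒᵖ}

lemma conerve_hom_app_unop_app (γ : H ⟶ i.conerve) {k : K} {a : A} (f : k ⟶ i.obj a) :
    (γ.app k).unop.app a f = (H.map f).unop.app a ((γ.app (i.obj a)).unop.app a (𝟙 _)) := by
  have : (γ.app k).unop.app a (f ≫ 𝟙 _) =
      (H.map f).unop.app a ((γ.app (i.obj a)).unop.app a (𝟙 _)) :=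
    (types_congr_hom (NatTrans.congr_app (congrArg Quiver.Hom.unop (γ.naturality f)) a) _).symm
  rwa [Category.comp_id] at this

lemma conerve_whiskerLeft_hom_app_unop_app (β : i ⋙ H ⟶ i ⋙ i.conerve) {a b : A} (m : a ⟶ b) :
    (β.app a).unop.app b (i.map m) =
      (H.map (i.map m)).unop.app b ((β.app b).unop.app b (𝟙 _)) := by
  have : (H.map (i.map m)).unop.app b ((β.app b).unop.app b (𝟙 _)) =
      (β.app a).unop.app b (i.map m ≫ 𝟙 _) :=
    types_congr_hom (NatTrans.congr_app (congrArg Quiver.Hom.unop (β.naturality m)) b) _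
  rw [Category.comp_id] at this
  exact this.symm

lemma conerve_hom_ext {γ γ' : H ⟶ i.conerve} (h : whiskerLeft i γ = whiskerLeft i γ') :
    γ = γ' := by
  ext k : 2
  apply Quiver.Hom.unop_inj
  ext a (f : k ⟶ i.obj a)
  change (γ.app k).unop.app a f = (γ'.app k).unop.app a f
  rw [conerve_hom_app_unop_app γ, conerve_hom_app_unop_app γ',
    show γ.app (i.obj a) = γ'.app (i.obj a) from NatTrans.congr_app h a]

/-- The only candidate allowed by `conerve_hom_app_unop_app`. -/
def conerveLift (β : i ⋙ H ⟶ i ⋙ i.conerve) : H ⟶ i.conerve where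
  app k := Quiver.Hom.op
    { app a := TypeCat.ofHom fun f : k ⟶ i.obj a =>
        (H.map f).unop.app a ((β.app a).unop.app a (𝟙 _))
      naturality a b m := by
        ext (f : k ⟶ i.obj a)
        have h : (β.app a).unop.app b (𝟙 _ ≫ i.map m) =
            (H.obj (i.obj a)).unop.map m ((β.app a).unop.app a (𝟙 _)) :=
          NatTrans.naturality_apply (β.app a).unop m (𝟙 (i.obj a))
        rw [Category.id_comp] at h
        change (H.map (f ≫ i.map m)).unop.app b ((β.app b).unop.app b (𝟙 _)) =
          (H.obj k).unop.map m ((H.map f).unop.app a ((β.app a).unop.app a (𝟙 _)))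
        rw [H.map_comp, unop_comp, NatTrans.comp_app, comp_apply,
          ← conerve_whiskerLeft_hom_app_unop_app, h, NatTrans.naturality_apply] }
  naturality k k' f := by
    apply Quiver.Hom.unop_inj
    ext a (g : k' ⟶ i.obj a)
    change (H.map f).unop.app a ((H.map g).unop.app a _) = (H.map (f ≫ g)).unop.app a _
    rw [H.map_comp, unop_comp, NatTrans.comp_app, comp_apply]

variable [i.Full]

lemma conerve_map_bijective (k : K) (a : A) :
    Function.Bijective fun f : k ⟶ i.obj a => i.conerve.map f := by
  refine ⟨fun f f' h => ?_, fun h => ⟨h.unop.app a (𝟙 (i.obj a)), ?_⟩⟩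
  · have := types_congr_hom (NatTrans.congr_app (congrArg Quiver.Hom.unop h) a) (𝟙 _)
    simp only [conerve_map_unop_app, Category.comp_id] at this
    exact this
  · apply Quiver.Hom.unop_inj
    ext b g
    obtain ⟨m, rfl⟩ := i.map_surjective g
    have := NatTrans.naturality_apply h.unop m (𝟙 (i.obj a))
    rw [conerve_obj_unop_map, Category.id_comp] at this
    exact this.symm

lemma whiskerLeft_conerveLift (β : i ⋙ H ⟶ i ⋙ i.conerve) :
    whiskerLeft i (conerveLift β) = β := by
  ext a : 2
  apply Quiver.Hom.unop_inj
  ext b (g : i.obj a ⟶ i.obj b)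
  obtain ⟨m, rfl⟩ := i.map_surjective g
  exact (conerve_whiskerLeft_hom_app_unop_app β m).symm

instance : i.conerve.IsRightKanExtension (𝟙 (i ⋙ i.conerve)) :=
  isRightKanExtension_of_bijective _ fun _ =>
    ⟨fun γ γ' h => conerve_hom_ext (by simpa using h),
      fun β => ⟨conerveLift β, by simp [whiskerLeft_conerveLift]⟩⟩

end Functor

namespace Functor.FullyFaithful

def compConerveIso {A : Type u'} [SmallCategory A] {K : Type u₂} [Category.{u'} K] {i : A ⥤ K}
    (hi : i.FullyFaithful) : i ⋙ i.conerve ≅ ysharp A :=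
  NatIso.ofComponents (fun a => (NatIso.ofComponents (fun b => hi.homEquiv.toIso)
    fun m => by ext f; simp).op) fun m => by
      apply Quiver.Hom.unop_inj
      ext b f
      exact (i.map_comp _ _).symm

def compNerveIso {A : Type u₁} [Category.{v₁} A] {K : Type u₂} [Category.{v₁} K] {i : A ⥤ K}
    (hi : i.FullyFaithful) : i ⋙ yoneda ⋙ (whiskeringLeft _ _ (Type v₁)).obj i.op ≅ yoneda :=
  isoWhiskerLeft i (isoWhiskerRight uliftYonedaIsoYoneda.{v₁}.symm _) ≪≫
    hi.compUliftYonedaCompWhiskeringLeft ≪≫ uliftYonedaIsoYoneda.{v₁}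

def precompConerveIso {A : Type u₁} [Category.{v₁} A] {K : Type u₂} [Category.{w₁} K]
    {P : Type*} [Category.{w₁} P] {R : K ⥤ P} (hR : R.FullyFaithful) {i : A ⥤ K} {j : A ⥤ P}
    (e : i ⋙ R ≅ j) : R ⋙ j.conerve ≅ i.conerve :=
  NatIso.ofComponents (fun k => (NatIso.ofComponents
    (fun a => (hR.homEquiv.trans (e.app a).homToEquiv).toIso)
    fun m => by ext f; simp [← e.hom.naturality m]).op) fun {k k'} f => by
      apply Quiver.Hom.unop_inj
      ext a (g : k' ⟶ i.obj a)
      change R.map f ≫ R.map g ≫ _ = R.map (f ≫ g) ≫ _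
      simp

end Functor.FullyFaithful

/-- `P ↦ Nat(P, y -)` preserves colimits and restricts to `y♯` along `y`, so it is `Lan_y y♯`. -/
def leftKanExtensionYsharpIso (A : Type u') [SmallCategory A] :
    yoneda.leftKanExtension (ysharp A) ≅ (yoneda : A ⥤ Aᵒᵖ ⥤ Type u').conerve := by
  let e : ysharp A ≅ uliftYoneda.{u'} ⋙ (yoneda : A ⥤ Aᵒᵖ ⥤ Type u').conerve :=
    Yoneda.fullyFaithful.compConerveIso.symm ≪≫
      isoWhiskerRight (uliftYonedaIsoYoneda.{u'} (C := A)).symm _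
  have := Presheaf.isLeftKanExtension_of_preservesColimits.{u'} _ e
  have := Functor.isLeftKanExtension_of_iso₁ (uliftYonedaIsoYoneda.{u'} (C := A)) e.hom
  exact leftKanExtensionUnique _ (yoneda.leftKanExtensionUnit (ysharp A)) _
    (e.hom ≫ whiskerRight (uliftYonedaIsoYoneda.{u'} (C := A)).hom _)

def nerveCompLeftKanExtensionYsharpIso (A : Type u') [SmallCategory A] {K : Type u₂}
    [Category.{u'} K] (i : A ⥤ K) (hi : i.FullyFaithful)
    (hR : (yoneda ⋙ (whiskeringLeft _ _ (Type u')).obj i.op).FullyFaithful) :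
    (yoneda ⋙ (whiskeringLeft _ _ (Type u')).obj i.op) ⋙ yoneda.leftKanExtension (ysharp A) ≅
      i.conerve :=
  isoWhiskerLeft _ (leftKanExtensionYsharpIso A) ≪≫ hR.precompConerveIso hi.compNerveIso

end CategoryTheory

theorem codensityMonad_of_dense_subcategory_induced_by_isbell
    (A : Type u') [SmallCategory A] {K : Type v'} [Category.{u'} K]
    [HasColimitsOfSize.{u', u'} K]
    -- `i` is a full subcategory of `K` ...
    (i : A ⥤ K) [i.Full] [i.Faithful]
    -- ... which is dense, i.e. the nerve `K(i-,-)` is fully faithful: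
    [(yoneda ⋙ (whiskeringLeft _ _ (Type u')).obj i.op).Full]
    [(yoneda ⋙ (whiskeringLeft _ _ (Type u')).obj i.op).Faithful]
    -- the codensity monad of `i` exists pointwise (`K` is also complete):
    [i.HasPointwiseRightKanExtension i]
    -- any adjunction `O ∘ R ⊣ L ∘ Spec` obtained by composition with the Isbell adjunction:
    (adj : ((yoneda ⋙ (whiskeringLeft _ _ (Type u')).obj i.op) ⋙ yoneda.leftKanExtension (ysharp A)) ⊣
      ((ysharp A).rightKanExtension yoneda ⋙ yoneda.leftKanExtension i)) :
    Nonempty (codensityMonad i ≅ adj.toMonad) := by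
  let Θ := nerveCompLeftKanExtensionYsharpIso A i (.ofFullyFaithful _) (.ofFullyFaithful _)
  have := isRightKanExtension_id_of_iso Θ i
  have (a : A) : IsIso (adj.unit.app (i.obj a)) :=
    adj.isIso_unit_app_of_map_bijective fun k => map_bijective_of_iso Θ (conerve_map_bijective k a)
  exact ⟨adj.codensityMonadIso i⟩
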